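/- arXiv:1210.2933 — 2 statements merged into one kernel-verified Lean document; each statement's English description precedes it below -/
import Mathlib

section
/- Let n ≥ 1, let V : ℝⁿ → ℝ be continuously differentiable with V(x) ≥ 0 for all x, let b : ℝⁿ × ℝ → ℝⁿ, and suppose there exist constants C > 0 and R₀ > 0 such that ⟨∇V(x), b(x,t)⟩ ≤ −C·V(x) for all t and all x with ‖x‖ ≥ R₀. Let x : [0,T] → ℝⁿ be differentiable with x'(t) = b(x(t), t) for all t ∈ [0,T]. Then for all t ∈ [0,T]: V(x(t)) ≤ max( V(x(0)), sup{ V(y) : ‖y‖ ≤ R₀ } ). -/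
/-!
Along the trajectory, `g t = V (x t)` has derivative `⟪∇V (x t), b (x t) t⟫`. Whenever `g` exceeds
the supremum of `V` on the closed ball of radius `R₀`, the point `x t` lies outside that ball, so
the dissipativity condition makes this derivative at most `-C · V (x t) ≤ 0`. A function that can
only decrease while it is above a level `M` never climbs above `max (g 0) M`.
-/

open Set

theorem image_le_max_of_deriv_right_nonpos_above {f f' : ℝ → ℝ} {a b M : ℝ}
    (hf : ContinuousOn f (Icc a b)) (hf' : ∀ t ∈ Ico a b, HasDerivWithinAt f (f' t) (Ici t) t)
    (bound : ∀ t ∈ Ico a b, M < f t → f' t ≤ 0) :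
    ∀ ⦃t⦄, t ∈ Icc a b → f t ≤ max (f a) M := by
  set K := max (f a) M
  -- The `+ 1` keeps the barrier strictly above `K ≥ M`, so at a contact point `f' ≤ 0 < ε`.
  have fence : ∀ ε > 0, ∀ ⦃t⦄, t ∈ Icc a b → f t ≤ K + ε * (t - a + 1) := fun ε hε =>
    image_le_of_deriv_right_lt_deriv_boundary hf hf' (by nlinarith [le_max_left (f a) M])
      (fun t => ((((hasDerivAt_id t).sub_const a).add_const 1).const_mul ε).const_add K)
      fun t ht hft => by
        have : M < f t := by nlinarith [le_max_right (f a) M, ht.1]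
        simpa using (bound t ht this).trans_lt hε
  intro t ht
  have hpos : 0 < t - a + 1 := by linarith [ht.1]
  refine le_of_forall_pos_le_add fun δ hδ => ?_
  simpa [div_mul_cancel₀ _ hpos.ne'] using fence (δ / (t - a + 1)) (div_pos hδ hpos) ht

theorem hasDerivAt_comp_eq_inner_gradient {E : Type*} [NormedAddCommGroup E]
    [InnerProductSpace ℝ E] [CompleteSpace E] {V : E → ℝ} {x : ℝ → E} {t : ℝ}
    (hV : DifferentiableAt ℝ V (x t)) (hx : DifferentiableAt ℝ x t) :
    HasDerivAt (fun s => V (x s)) (inner ℝ (gradient V (x t)) (deriv x t)) t := by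
  rw [inner_gradient_left]
  exact hV.hasFDerivAt.comp_hasDerivAt t hx.hasDerivAt

theorem le_sSup_image_closedBall {E : Type*} [SeminormedAddCommGroup E] [ProperSpace E]
    {V : E → ℝ} (hV : Continuous V) {R : ℝ} {y : E} (hy : ‖y‖ ≤ R) :
    V y ≤ sSup (V '' Metric.closedBall 0 R) :=
  le_csSup ((isCompact_closedBall 0 R).bddAbove_image hV.continuousOn)
    ⟨y, mem_closedBall_zero_iff.mpr hy, rfl⟩

theorem stmt_10_general (n : ℕ)
    (V : EuclideanSpace ℝ (Fin n) → ℝ) (hV : ContDiff ℝ 1 V)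
    (hVpos : ∀ x, 0 ≤ V x)
    (b : EuclideanSpace ℝ (Fin n) → ℝ → EuclideanSpace ℝ (Fin n))
    (C R₀ : ℝ) (hC : 0 < C)
    (hdiss : ∀ t : ℝ, ∀ x : EuclideanSpace ℝ (Fin n), R₀ ≤ ‖x‖ →
      inner ℝ (gradient V x) (b x t) ≤ -C * V x)
    (T : ℝ) (x : ℝ → EuclideanSpace ℝ (Fin n))
    (hx : Differentiable ℝ x)
    (hxeq : ∀ t ∈ Icc (0 : ℝ) T, deriv x t = b (x t) t) :
    ∀ t ∈ Icc (0 : ℝ) T,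
      V (x t) ≤ max (V (x 0)) (sSup (V '' Metric.closedBall 0 R₀)) := by
  have hVdiff : Differentiable ℝ V := hV.differentiable one_ne_zero
  have hderiv (t : ℝ) := hasDerivAt_comp_eq_inner_gradient (hVdiff (x t)) (hx t)
  refine image_le_max_of_deriv_right_nonpos_above (hVdiff.comp hx).continuous.continuousOn
    (fun t _ => (hderiv t).hasDerivWithinAt) fun t ht habove => ?_
  have hfar : R₀ ≤ ‖x t‖ := by
    by_contra! hnear
    exact habove.not_ge (le_sSup_image_closedBall hV.continuous hnear.le)
  calc inner ℝ (gradient V (x t)) (deriv x t)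
      = inner ℝ (gradient V (x t)) (b (x t) t) := by rw [hxeq t (Ico_subset_Icc_self ht)]
    _ ≤ -C * V (x t) := hdiss t (x t) hfar
    _ ≤ 0 := mul_nonpos_of_nonpos_of_nonneg (neg_nonpos.mpr hC.le) (hVpos _)

/-- Boundedness consequence of dissipativity (Definition 1) in the deterministic
case: if `⟨∇V(x), b(x,t)⟩ ≤ −C·V(x)` outside the ball of radius `R₀`, then along
any solution of `x' = b(x,t)` the Lyapunov function is bounded by the larger of
its initial value and its supremum on that ball. -/
theorem stmt_10 (n : ℕ) (hn : 1 ≤ n)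
    (V : EuclideanSpace ℝ (Fin n) → ℝ) (hV : ContDiff ℝ 1 V)
    (hVpos : ∀ x, 0 ≤ V x)
    (b : EuclideanSpace ℝ (Fin n) → ℝ → EuclideanSpace ℝ (Fin n))
    (C R₀ : ℝ) (hC : 0 < C) (hR₀ : 0 < R₀)
    (hdiss : ∀ t : ℝ, ∀ x : EuclideanSpace ℝ (Fin n), R₀ ≤ ‖x‖ →
      inner ℝ (gradient V x) (b x t) ≤ -C * V x)
    (T : ℝ) (x : ℝ → EuclideanSpace ℝ (Fin n))
    (hx : Differentiable ℝ x)
    (hxeq : ∀ t ∈ Icc (0 : ℝ) T, deriv x t = b (x t) t) :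
    ∀ t ∈ Icc (0 : ℝ) T,
      V (x t) ≤ max (V (x 0)) (sSup (V '' Metric.closedBall 0 R₀)) :=
  stmt_10_general n V hV hVpos b C R₀ hC hdiss T x hx hxeq
end

section
/- Let a > 0, b, c ∈ ℝ, let h : ℝ → ℝ be continuous, let x₀ ∈ ℝ and T > 0. Then there exists a unique differentiable function x : [0,T] → ℝ with x(0) = x₀ and x'(t) = −a·x(t)³ − b·x(t)² − c·x(t) + h(t) for all t ∈ [0,T]. -/
open Set Metric Function
open scoped NNReal

/-!
The cubic drift is only locally Lipschitz, but since `a > 0` it points into `[-M, M]` at both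
endpoints once `M` is large, uniformly in `t` because `h` is bounded on `[0, T]`. Clamping the
state to `[-M, M]` gives a globally Lipschitz field, for which Picard–Lindelöf yields a solution
on all of `[0, T]`; a barrier argument keeps that solution inside `[-M, M]`, where the clamp does
nothing.
Uniqueness is Grönwall's: two solutions are bounded on `[0, T]`, and the drift is Lipschitz on
bounded sets.
-/

section

variable {E : Type*} [NormedAddCommGroup E] [NormedSpace ℝ E]

lemma HasDerivWithinAt.mono_Ici_of_Icc {f : ℝ → E} {f' : E} {a b t : ℝ}
    (hf : HasDerivWithinAt f f' (Icc a b) t) (ht : t ∈ Ico a b) :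
    HasDerivWithinAt f f' (Ici t) t :=
  hf.mono_of_mem_nhdsWithin (Icc_mem_nhdsGE_of_mem ht)

theorem ODE_solution_unique_of_lipschitzOnWith_closedBall {v : ℝ → E → E} {f g : ℝ → E}
    {a b : ℝ} (hv : ∀ R, ∃ K, ∀ t ∈ Ico a b, LipschitzOnWith K (v t) (closedBall 0 R))
    (hf : ∀ t ∈ Icc a b, HasDerivWithinAt f (v t (f t)) (Icc a b) t)
    (hg : ∀ t ∈ Icc a b, HasDerivWithinAt g (v t (g t)) (Icc a b) t) (ha : f a = g a) :
    EqOn f g (Icc a b) := by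
  have hf_cont := HasDerivWithinAt.continuousOn hf
  have hg_cont := HasDerivWithinAt.continuousOn hg
  obtain ⟨Rf, hRf⟩ := isCompact_Icc.exists_bound_of_continuousOn hf_cont
  obtain ⟨Rg, hRg⟩ := isCompact_Icc.exists_bound_of_continuousOn hg_cont
  obtain ⟨K, hK⟩ := hv (max Rf Rg)
  exact ODE_solution_unique_of_mem_Icc_right hK
    hf_cont (fun t ht => (hf t (Ico_subset_Icc_self ht)).mono_Ici_of_Icc ht)
    (fun t ht => mem_closedBall_zero_iff.2 <| (hRf t (Ico_subset_Icc_self ht)).trans <|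
      le_max_left _ _)
    hg_cont (fun t ht => (hg t (Ico_subset_Icc_self ht)).mono_Ici_of_Icc ht)
    (fun t ht => mem_closedBall_zero_iff.2 <| (hRg t (Ico_subset_Icc_self ht)).trans <|
      le_max_right _ _)
    ha

theorem exists_hasDerivWithinAt_Icc_of_lipschitzWith [CompleteSpace E] {f : ℝ → E → E}
    {t₀ T : ℝ} (hT : t₀ ≤ T) (x₀ : E) {K L : ℝ≥0}
    (hlip : ∀ t ∈ Icc t₀ T, LipschitzWith K (f t))
    (hcont : ∀ x, ContinuousOn (f · x) (Icc t₀ T))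
    (hbdd : ∀ t ∈ Icc t₀ T, ∀ x, ‖f t x‖ ≤ L) :
    ∃ α : ℝ → E, α t₀ = x₀ ∧
      ∀ t ∈ Icc t₀ T, HasDerivWithinAt α (f t (α t)) (Icc t₀ T) t := by
  have hpl : IsPicardLindelof f (tmin := t₀) (tmax := T) ⟨t₀, le_rfl, hT⟩ x₀
      (L * (T - t₀).toNNReal) 0 L K :=
    { lipschitzOnWith := fun t ht => (hlip t ht).lipschitzOnWith
      continuousOn := fun x _ => hcont x
      norm_le := fun t ht x _ => hbdd t ht x
      mul_max_le := by simp [hT] }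
  exact hpl.exists_eq_forall_mem_Icc_hasDerivWithinAt₀

end

theorem exists_hasDerivWithinAt_Icc_of_inward {v : ℝ → ℝ → ℝ} {t₀ T m M x₀ : ℝ}
    (hT : t₀ ≤ T) (hx₀ : x₀ ∈ Icc m M)
    (hcont : ContinuousOn (uncurry v) (Icc t₀ T ×ˢ Icc m M))
    (hlip : ∃ K, ∀ t ∈ Icc t₀ T, LipschitzOnWith K (v t) (Icc m M))
    (hm : ∀ t ∈ Icc t₀ T, 0 < v t m) (hM : ∀ t ∈ Icc t₀ T, v t M < 0) :
    ∃ x : ℝ → ℝ, x t₀ = x₀ ∧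
      ∀ t ∈ Icc t₀ T, HasDerivWithinAt x (v t (x t)) (Icc t₀ T) t := by
  have hmM : m ≤ M := hx₀.1.trans hx₀.2
  set w : ℝ → ℝ → ℝ := fun t y => v t (projIcc m M hmM y)
  obtain ⟨K, hK⟩ := hlip
  obtain ⟨L, hL⟩ := (isCompact_Icc.prod isCompact_Icc).exists_bound_of_continuousOn hcont
  obtain ⟨x, hx_t₀, hx⟩ := exists_hasDerivWithinAt_Icc_of_lipschitzWith (f := w) hT x₀
    (K := K) (L := L.toNNReal)
    (fun t ht => mul_one K ▸ (hK t ht).to_restrict.comp (LipschitzWith.projIcc hmM))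
    (fun y => hcont.comp (continuousOn_id.prodMk continuousOn_const)
      fun t ht => ⟨ht, Subtype.mem _⟩)
    (fun t ht y => (hL (t, _) ⟨ht, Subtype.mem _⟩).trans (Real.le_coe_toNNReal L))
  have hx_cont := HasDerivWithinAt.continuousOn hx
  have hx' : ∀ t ∈ Ico t₀ T, HasDerivWithinAt x (w t (x t)) (Ici t) t :=
    fun t ht => (hx t (Ico_subset_Icc_self ht)).mono_Ici_of_Icc ht
  have hx_le : ∀ t ∈ Icc t₀ T, x t ≤ M :=
    image_le_of_deriv_right_lt_deriv_boundary hx_cont hx' (hx_t₀.trans_le hx₀.2)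
      (fun _ => hasDerivAt_const _ M) fun t ht hxt => by
        simpa [w, hxt] using hM t (Ico_subset_Icc_self ht)
  have hx_ge : ∀ t ∈ Icc t₀ T, m ≤ x t :=
    image_le_of_deriv_right_lt_deriv_boundary' continuousOn_const
      (fun t _ => hasDerivWithinAt_const t _ m) (hx₀.1.trans_eq hx_t₀.symm) hx_cont hx'
      fun t ht hxt => by simpa [w, ← hxt] using hm t (Ico_subset_Icc_self ht)
  refine ⟨x, hx_t₀, fun t ht => ?_⟩
  simpa [w, projIcc_of_mem hmM ⟨hx_ge t ht, hx_le t ht⟩] using hx t ht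

lemma cubic_add_neg_of_lt {a b c d z : ℝ} (hz : 1 ≤ z) (hlt : |b| + |c| + |d| < a * z) :
    -a * z ^ 3 - b * z ^ 2 - c * z + d < 0 := by
  have hz2 : z ≤ z ^ 2 := by nlinarith
  calc -a * z ^ 3 - b * z ^ 2 - c * z + d
      ≤ z ^ 2 * (|b| + |c| + |d| - a * z) := by
        nlinarith [neg_abs_le b, neg_abs_le c, le_abs_self d, abs_nonneg c, abs_nonneg d]
    _ < 0 := mul_neg_of_pos_of_neg (by positivity) (by linarith)

lemma exists_cubic_inward {a : ℝ} (ha : 0 < a) (b c H x₀ : ℝ) :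
    ∃ M, |x₀| ≤ M ∧ ∀ d, |d| ≤ H →
      0 < -a * (-M) ^ 3 - b * (-M) ^ 2 - c * (-M) + d ∧
        -a * M ^ 3 - b * M ^ 2 - c * M + d < 0 := by
  set M := max (max |x₀| 1) ((|b| + |c| + H) / a + 1)
  have hM₁ : 1 ≤ M := (le_max_right _ _).trans (le_max_left _ _)
  have hMa : |b| + |c| + H < a * M := by
    rw [← div_lt_iff₀' ha]
    exact (lt_add_one _).trans_le (le_max_right _ _)
  refine ⟨M, (le_max_left _ _).trans (le_max_left _ _), fun d hd => ⟨?_, ?_⟩⟩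
  · have := cubic_add_neg_of_lt (a := a) (b := -b) (c := c) (d := -d) hM₁
      (by rw [abs_neg, abs_neg]; linarith)
    linear_combination this
  · exact cubic_add_neg_of_lt hM₁ (by linarith)

lemma exists_lipschitzOnWith_cubic (a b c : ℝ) {s : Set ℝ} (hs : IsCompact s) :
    ∃ K, ∀ d, LipschitzOnWith K (fun z => -a * z ^ 3 - b * z ^ 2 - c * z + d) s := by
  have hp : ContDiff ℝ 1 fun z : ℝ => -a * z ^ 3 - b * z ^ 2 - c * z := by fun_prop
  obtain ⟨K, hK⟩ :=
    (hp.locallyLipschitz.locallyLipschitzOn (s := s)).exists_lipschitzOnWith_of_compact hs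
  exact ⟨K, fun d z hz w hw => by simpa only [edist_add_right] using hK hz hw⟩

/-- Global existence and uniqueness on `[0,T]` of the solution of the noise-free
cubic equation of Example 1: `x' = −a·x³ − b·x² − c·x + h(t)`, `x(0) = x₀`,
with `a > 0` and continuous forcing `h`. -/
theorem stmt_11 (a b c : ℝ) (ha : 0 < a) (h : ℝ → ℝ) (hh : Continuous h)
    (x₀ T : ℝ) (hT : 0 < T) :
    (∃ x : ℝ → ℝ, x 0 = x₀ ∧ ∀ t ∈ Icc (0 : ℝ) T,
      HasDerivWithinAt x
        (-a * (x t) ^ 3 - b * (x t) ^ 2 - c * x t + h t) (Icc (0 : ℝ) T) t) ∧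
    (∀ x y : ℝ → ℝ,
      (x 0 = x₀ ∧ ∀ t ∈ Icc (0 : ℝ) T,
        HasDerivWithinAt x
          (-a * (x t) ^ 3 - b * (x t) ^ 2 - c * x t + h t) (Icc (0 : ℝ) T) t) →
      (y 0 = x₀ ∧ ∀ t ∈ Icc (0 : ℝ) T,
        HasDerivWithinAt y
          (-a * (y t) ^ 3 - b * (y t) ^ 2 - c * y t + h t) (Icc (0 : ℝ) T) t) →
      ∀ t ∈ Icc (0 : ℝ) T, x t = y t) := by
  let v : ℝ → ℝ → ℝ := fun t z => -a * z ^ 3 - b * z ^ 2 - c * z + h t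
  obtain ⟨H, hH⟩ := isCompact_Icc.exists_bound_of_continuousOn (s := Icc 0 T) hh.continuousOn
  obtain ⟨M, hx₀M, hM⟩ := exists_cubic_inward ha b c H x₀
  obtain ⟨K, hK⟩ := exists_lipschitzOnWith_cubic a b c (isCompact_Icc (a := -M) (b := M))
  refine ⟨exists_hasDerivWithinAt_Icc_of_inward (v := v) hT.le (abs_le.1 hx₀M) (by fun_prop)
    ⟨K, fun t _ => hK (h t)⟩ (fun t ht => (hM _ (hH t ht)).1)
    (fun t ht => (hM _ (hH t ht)).2), ?_⟩
  rintro x y ⟨hx₀, hx⟩ ⟨hy₀, hy⟩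
  refine ODE_solution_unique_of_lipschitzOnWith_closedBall (v := v) (fun R => ?_) hx hy
    (hx₀.trans hy₀.symm)
  obtain ⟨K, hK⟩ := exists_lipschitzOnWith_cubic a b c (isCompact_closedBall (0 : ℝ) R)
  exact ⟨K, fun t _ => hK (h t)⟩
end
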